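/- arXiv:2305.17059 — 4 statements merged into one kernel-verified Lean document; each statement's English description precedes it below -/
import Mathlib

section
/- Suppose that 𝒜 ⊆ [ω]^ω has cardinality less than 𝔟, that {Bᵢ : i ∈ ω} ⊆ [ω]^ω, and that A ∩ Bᵢ is finite for every A ∈ 𝒜 and every i ∈ ω. Then there exists X ⊆ ω such that A ⊆* ω \ X for every A ∈ 𝒜 and Bᵢ ⊆* X for every i ∈ ω (i.e., there are no (ω, <𝔟)-gaps). -/
open Filter Set

/-- `f ≤* g`: eventual domination. -/
def EvLE (f g : ℕ → ℕ) : Prop := ∀ᶠ n in Filter.atTop, f n ≤ g n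

/-- The bounding number `𝔟`: least cardinality of an `≤*`-unbounded family. -/
noncomputable def bNumber : Cardinal :=
  sInf { c | ∃ F : Set (ℕ → ℕ), Cardinal.mk F = c ∧ ¬ ∃ g : ℕ → ℕ, ∀ f ∈ F, EvLE f g }

/-! For a sequence `B` and a function `g`, the set `X = ⋃ i, {x ∈ B i | g i < x}` cuts each `B i`
below `g i`. Each `B i` is then almost contained in `X`, and a set `A` meeting every `B i` finitely is almost
disjoint from `X` as soon as `g` eventually dominates `i ↦ max (A ∩ B i)`: beyond that point the
elements of `A ∩ B i` all lie below `g i`. Fewer than `𝔟` such functions have a common bound `g`. -/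

theorem exists_evLE_of_mk_lt_bNumber {α : Type} (s : Set α) (f : α → ℕ → ℕ)
    (hs : Cardinal.mk s < bNumber) : ∃ g : ℕ → ℕ, ∀ a ∈ s, EvLE (f a) g := by
  by_contra hunbdd
  have hle : bNumber ≤ Cardinal.mk (f '' s) :=
    csInf_le' ⟨f '' s, rfl, fun ⟨g, hg⟩ => hunbdd ⟨g, fun a ha => hg _ (mem_image_of_mem f ha)⟩⟩
  exact hs.not_ge (hle.trans Cardinal.mk_image_le)

def aboveGraph (B : ℕ → Set ℕ) (g : ℕ → ℕ) : Set ℕ := ⋃ i, {x ∈ B i | g i < x}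

theorem diff_aboveGraph_finite (B : ℕ → Set ℕ) (g : ℕ → ℕ) (i : ℕ) :
    (B i \ aboveGraph B g).Finite := by
  refine (finite_le_nat (g i)).subset fun x ⟨hxB, hxX⟩ => ?_
  by_contra hgx
  exact hxX (mem_iUnion.2 ⟨i, hxB, not_le.1 hgx⟩)

theorem inter_aboveGraph_finite {A : Set ℕ} {B : ℕ → Set ℕ} {g : ℕ → ℕ}
    (hfin : ∀ i, (A ∩ B i).Finite) (hg : EvLE (fun i => sSup (A ∩ B i)) g) :
    (A ∩ aboveGraph B g).Finite := by
  obtain ⟨n, hn⟩ := eventually_atTop.1 hg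
  refine ((finite_lt_nat n).biUnion fun i _ => hfin i).subset ?_
  rintro x ⟨hxA, hxX⟩
  obtain ⟨i, hxB, hgx⟩ := mem_iUnion.1 hxX
  refine mem_iUnion₂.2 ⟨i, show i < n from not_le.1 fun hni => ?_, hxA, hxB⟩
  have hx_le : x ≤ sSup (A ∩ B i) := le_csSup (hfin i).bddAbove ⟨hxA, hxB⟩
  exact (hx_le.trans (hn i hni)).not_gt hgx

theorem no_omega_lt_b_gaps_general (𝒜 : Set (Set ℕ)) (B : ℕ → Set ℕ)
    (hcard : Cardinal.mk 𝒜 < bNumber)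
    (hfin : ∀ A ∈ 𝒜, ∀ i, (A ∩ B i).Finite) :
    ∃ X : Set ℕ, (∀ A ∈ 𝒜, (A \ (Set.univ \ X)).Finite) ∧ ∀ i, (B i \ X).Finite := by
  obtain ⟨g, hg⟩ := exists_evLE_of_mk_lt_bNumber 𝒜 (fun A i => sSup (A ∩ B i)) hcard
  refine ⟨aboveGraph B g, fun A hA => ?_, diff_aboveGraph_finite B g⟩
  rw [← compl_eq_univ_sdiff, sdiff_compl]
  exact inter_aboveGraph_finite (hfin A hA) (hg A hA)

/-- There are no `(ω, <𝔟)`-gaps. -/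
theorem no_omega_lt_b_gaps (𝒜 : Set (Set ℕ)) (B : ℕ → Set ℕ)
    (h𝒜inf : ∀ A ∈ 𝒜, A.Infinite) (hcard : Cardinal.mk 𝒜 < bNumber)
    (hBinf : ∀ i, (B i).Infinite)
    (hfin : ∀ A ∈ 𝒜, ∀ i, (A ∩ B i).Finite) :
    ∃ X : Set ℕ, (∀ A ∈ 𝒜, (A \ (Set.univ \ X)).Finite) ∧ ∀ i, (B i \ X).Finite :=
  no_omega_lt_b_gaps_general 𝒜 B hcard hfin
end

section
/- Every separable Fréchet–Urysohn α₂ space is H-separable. -/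
open Filter Set

variable {X : Type*} [TopologicalSpace X]

/-- The set `S` is an infinite set ("sequence") converging to `x`. -/
def ConvergesTo (S : Set X) (x : X) : Prop :=
  S.Infinite ∧ x ∉ S ∧ ∀ U ∈ nhds x, (S \ U).Finite

/-- `X` is Fréchet–Urysohn: every point in the closure of `A` but not in `A`
is the limit of a sequence from `A \ {x}`. -/
def FUSpace (X : Type*) [TopologicalSpace X] : Prop :=
  ∀ (A : Set X) (x : X), x ∈ closure A \ A →
    ∃ S : Set X, S ⊆ A \ {x} ∧ ConvergesTo S x

/-- `X` is `α₂` at every point. -/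
def Alpha2Space (X : Type*) [TopologicalSpace X] : Prop :=
  ∀ (x : X) (S : ℕ → Set X), (∀ n, ConvergesTo (S n) x) →
    ∃ T : Set X, ConvergesTo T x ∧ ∀ n, (S n ∩ T).Infinite

/-- `X` is H-separable. -/
def HSeparable (X : Type*) [TopologicalSpace X] : Prop :=
  ∀ D : ℕ → Set X, (∀ n, Dense (D n)) →
    ∃ F : ℕ → Set X, (∀ n, (F n).Finite ∧ F n ⊆ D n) ∧
      ∀ U : Set X, IsOpen U → U.Nonempty → ∀ᶠ n in Filter.atTop, (U ∩ F n).Nonempty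

/-- Every separable Fréchet–Urysohn `α₂` space is H-separable. -/
theorem separable_FU_alpha2_HSeparable [TopologicalSpace.SeparableSpace X]
    (hFU : FUSpace X) (hα2 : Alpha2Space X) : HSeparable X := by
  classical
  intro D hD
  cases isEmpty_or_nonempty X with
  | inl h =>
    refine ⟨fun _ => ∅, fun n => ⟨finite_empty, empty_subset _⟩, ?_⟩
    intro U _ hU
    exact (h.false hU.some).elim
  | inr h =>
    obtain ⟨u, hu⟩ := TopologicalSpace.exists_dense_seq X
    have key : ∀ x : X, ∃ G : ℕ → Set X,
        (∀ n, (G n).Finite ∧ G n ⊆ D n) ∧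
        ∀ U ∈ nhds x, ∀ᶠ n in Filter.atTop, (G n ∩ U).Nonempty := by
      intro x
      by_cases hB : ∀ n, x ∈ D n
      · refine ⟨fun _ => {x}, fun n => ⟨finite_singleton x, singleton_subset_iff.2 (hB n)⟩, ?_⟩
        intro U hU
        exact Filter.Eventually.of_forall fun n => ⟨x, rfl, mem_of_mem_nhds hU⟩
      · push_neg at hB
        obtain ⟨n0, hn0⟩ := hB
        have hS : ∀ n, x ∉ D n → ∃ S : Set X, S ⊆ D n \ {x} ∧ ConvergesTo S x := by
          intro n hn
          exact hFU (D n) x ⟨hD n x, hn⟩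
        set Sfun : ℕ → Set X :=
          fun n => if h : x ∈ D n then (hS n0 hn0).choose else (hS n h).choose with hSfun
        have hSconv : ∀ n, ConvergesTo (Sfun n) x := by
          intro n
          by_cases h : x ∈ D n
          · simp only [hSfun, dif_pos h]; exact (hS n0 hn0).choose_spec.2
          · simp only [hSfun, dif_neg h]; exact (hS n h).choose_spec.2
        obtain ⟨T, hT, hint⟩ := hα2 x Sfun hSconv
        have hex : ∀ n, ∃ t : Finset X, ↑t ⊆ Sfun n ∩ T ∧ t.card = n + 1 := fun n =>
          (hint n).exists_subset_card_eq (n + 1)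
        choose t ht1 ht2 using hex
        refine ⟨fun n => if h : x ∈ D n then {x} else ↑(t n), ?_, ?_⟩
        · intro n
          by_cases h : x ∈ D n
          · simp only [dif_pos h]
            exact ⟨finite_singleton x, singleton_subset_iff.2 h⟩
          · simp only [dif_neg h]
            refine ⟨(t n).finite_toSet, ?_⟩
            have hsub : Sfun n ⊆ D n := by
              simp only [hSfun, dif_neg h]
              exact ((hS n h).choose_spec.1).trans diff_subset
            exact ((ht1 n).trans inter_subset_left).trans hsub
        · intro U hU
          have hTU : (T \ U).Finite := hT.2.2 U hU
          refine Filter.eventually_atTop.2 ⟨(T \ U).ncard, fun n hn => ?_⟩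
          by_cases h : x ∈ D n
          · simp only [dif_pos h]
            exact ⟨x, rfl, mem_of_mem_nhds hU⟩
          · simp only [dif_neg h]
            by_contra hcon
            rw [not_nonempty_iff_eq_empty] at hcon
            have hsub : (↑(t n) : Set X) ⊆ T \ U := by
              intro y hy
              exact ⟨(ht1 n hy).2,
                fun hyU => Set.eq_empty_iff_forall_notMem.1 hcon y ⟨hy, hyU⟩⟩
            have hle := Set.ncard_le_ncard hsub hTU
            rw [Set.ncard_coe_finset, ht2 n] at hle
            omega
    choose G hG1 hG2 using key
    refine ⟨fun n => ⋃ k ∈ Finset.range (n + 1), G (u k) n, ?_, ?_⟩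
    · intro n
      constructor
      · exact (Finset.range (n + 1)).finite_toSet.biUnion fun k _ => (hG1 (u k) n).1
      · exact iUnion₂_subset fun k _ => (hG1 (u k) n).2
    · intro U hUo hUne
      obtain ⟨k, hk⟩ := hu.exists_mem_open hUo hUne
      have h1 := hG2 (u k) U (hUo.mem_nhds hk)
      filter_upwards [h1, Filter.eventually_ge_atTop k] with n hn hkn
      obtain ⟨y, hy1, hy2⟩ := hn
      exact ⟨y, hy2, mem_iUnion₂.2 ⟨k, Finset.mem_range.2 (Nat.lt_succ_of_le hkn), hy1⟩⟩
end

section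
/- Every countable topological space of character less than 𝔟 is an α₁ space. -/
open Filter Set

variable {X : Type*} [TopologicalSpace X]

/-- `X` is `α₁` at `x`. -/
def Alpha1At (x : X) : Prop :=
  ∀ S : ℕ → Set X, (∀ n, ConvergesTo (S n) x) →
    ∃ T : Set X, ConvergesTo T x ∧ ∀ n, (S n \ T).Finite

/-- `X` has character `< 𝔟` at `x`: some neighbourhood base at `x` of size `< 𝔟`. -/
def CharLtB (x : X) : Prop :=
  ∃ B : Set (Set X), Cardinal.lift.{0} (Cardinal.mk B) < Cardinal.lift bNumber ∧ (∀ U ∈ B, U ∈ nhds x) ∧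
    ∀ V ∈ nhds x, ∃ U ∈ B, U ⊆ V

/-- Any family of size `< bNumber` is bounded. -/
lemma bounded_of_lt_bNumber {F : Set (ℕ → ℕ)} (h : Cardinal.mk F < bNumber) :
    ∃ g : ℕ → ℕ, ∀ f ∈ F, EvLE f g := by
  by_contra hF
  have hle : bNumber ≤ Cardinal.mk F := csInf_le' ⟨F, rfl, hF⟩
  exact absurd hle (not_le.2 h)

lemma exists_enum {Y : Type*} [Countable Y] {S : Set Y} (hS : S.Infinite) :
    ∃ s : ℕ → Y, Function.Injective s ∧ Set.range s = S := by
  have h1 : Countable S := (S.to_countable).to_subtype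
  have h2 : Infinite S := hS.to_subtype
  obtain ⟨e⟩ : Nonempty (ℕ ≃ S) := nonempty_equiv_of_countable
  refine ⟨fun n => (e n : Y), fun a b h => e.injective (Subtype.ext h), ?_⟩
  ext y
  constructor
  · rintro ⟨n, rfl⟩; exact (e n).2
  · intro hy; exact ⟨e.symm ⟨y, hy⟩, by simp⟩

/-- Every countable space of character less than `𝔟` is an `α₁` space. -/
theorem countable_character_lt_b_alpha1 [Countable X]
    (hchar : ∀ x : X, CharLtB x) : ∀ x : X, Alpha1At x := by
  intro x S hS
  obtain ⟨B, hBcard, hBnhds, hBbase⟩ := hchar x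
  -- enumerate each S n injectively
  have hs : ∀ n, ∃ s : ℕ → X, Function.Injective s ∧ Set.range s = S n :=
    fun n => exists_enum (hS n).1
  choose s hsinj hsran using hs
  -- for each U ∈ B, a function f_U
  have hf : ∀ U : B, ∃ f : ℕ → ℕ, ∀ n, ∀ k, f n ≤ k → s n k ∈ (U : Set X) := by
    intro U
    have h : ∀ n, ∃ m : ℕ, ∀ k, m ≤ k → s n k ∈ (U : Set X) := by
      intro n
      have hfin : {k | s n k ∉ (U : Set X)}.Finite := by
        have : (S n \ (U : Set X)).Finite := (hS n).2.2 _ (hBnhds U U.2)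
        have := this.preimage (f := s n) (hsinj n).injOn
        refine this.subset ?_
        intro k hk
        exact ⟨by rw [← hsran n]; exact ⟨k, rfl⟩, hk⟩
      obtain ⟨m, hm⟩ := hfin.bddAbove
      refine ⟨m + 1, fun k hk => ?_⟩
      by_contra hc
      exact absurd (hm hc) (by omega)
    choose f hf using h
    exact ⟨f, hf⟩
  choose f hfspec using hf
  -- the family {f_U} has size < bNumber, hence is bounded
  have hcard : Cardinal.mk (Set.range f) < bNumber := by
    have h1 := Cardinal.mk_range_le_lift (f := f)
    rw [Cardinal.lift_uzero] at hBcard h1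
    exact Cardinal.lift_lt.mp (lt_of_le_of_lt h1 hBcard)
  obtain ⟨g, hg⟩ := bounded_of_lt_bNumber hcard
  -- the set T
  refine ⟨⋃ n, s n '' {k | g n ≤ k}, ⟨?_, ?_, ?_⟩, ?_⟩
  · -- infinite
    refine Set.Infinite.mono (Set.subset_iUnion (fun n => s n '' {k | g n ≤ k}) 0) ?_
    exact Set.Infinite.image (Set.injOn_of_injective (hsinj 0))
      (Set.Ici_infinite (g 0))
  · -- x ∉ T
    rintro ⟨_, ⟨n, rfl⟩, _, _, rfl⟩
    exact (hS n).2.1 (by rw [← hsran n]; exact ⟨_, rfl⟩)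
  · -- converges
    intro V hV
    obtain ⟨U, hUB, hUV⟩ := hBbase V hV
    have hEv := hg (f ⟨U, hUB⟩) ⟨⟨U, hUB⟩, rfl⟩
    obtain ⟨N, hN⟩ := eventually_atTop.mp hEv
    have hsub : (⋃ n, s n '' {k | g n ≤ k}) \ V ⊆ ⋃ n ∈ Finset.range N, (S n \ U) := by
      rintro y ⟨⟨_, ⟨n, rfl⟩, k, hk, rfl⟩, hyV⟩
      have hyU : s n k ∉ U := fun h => hyV (hUV h)
      have hnN : n < N := by
        by_contra hc
        exact hyU (hfspec ⟨U, hUB⟩ n k (le_trans (hN n (by omega)) hk))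
      simp only [Set.mem_iUnion, Finset.mem_range]
      exact ⟨n, hnN, by rw [← hsran n]; exact ⟨k, rfl⟩, hyU⟩
    refine Set.Finite.subset ?_ hsub
    exact Set.Finite.biUnion (Finset.range N).finite_toSet
      (fun n _ => (hS n).2.2 U (hBnhds U hUB))
  · -- S n \ T finite
    intro n
    have : S n \ (⋃ m, s m '' {k | g m ≤ k}) ⊆ s n '' {k | k < g n} := by
      intro y ⟨hy, hyT⟩
      rw [← hsran n] at hy
      obtain ⟨k, rfl⟩ := hy
      refine ⟨k, ?_, rfl⟩
      by_contra hc
      exact hyT (Set.mem_iUnion.2 ⟨n, ⟨k, (not_lt.mp hc : g n ≤ k), rfl⟩⟩)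
    exact Set.Finite.subset ((Set.finite_Iio (g n)).image (s n)) this
end

section
/- For every 0 < δ < ε and every almost disjoint family 𝒜 of infinite subsets of ℚ consisting of convergent sequences and closed discrete sets that is maximal among such families, there exists a closed discrete set D ⊆ ℚ with D ∈ ℐ(𝒜)⁺ such that δ < |x| < ε for every x ∈ D. -/
open Filter Set

/-- The set `S ⊆ ℚ` is a sequence converging (in ℚ) to some point. -/
def ConvSeq (S : Set ℚ) : Prop :=
  S.Infinite ∧ ∃ q : ℚ, q ∉ S ∧ ∀ U ∈ nhds q, (S \ U).Finite

/-- `S ⊆ ℚ` is closed and discrete. -/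
def ClosedDiscrete (S : Set ℚ) : Prop :=
  IsClosed S ∧ ∀ x ∈ S, ∃ U ∈ nhds x, U ∩ S = {x}

/-- `𝒜` is an almost disjoint family of infinite subsets of ℚ. -/
def ADFamily (𝒜 : Set (Set ℚ)) : Prop :=
  (∀ A ∈ 𝒜, A.Infinite) ∧ ∀ A ∈ 𝒜, ∀ B ∈ 𝒜, A ≠ B → (A ∩ B).Finite

/-- `X ∈ ℐ(𝒜)⁺`. -/
def IPlus (𝒜 : Set (Set ℚ)) (X : Set ℚ) : Prop :=
  X.Infinite ∧ {A ∈ 𝒜 | (A ∩ X).Infinite}.Infinite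

/-- `𝒜` is maximal: no infinite subset of ℚ is almost disjoint from all members. -/
def MaximalAD (𝒜 : Set (Set ℚ)) : Prop :=
  ¬ ∃ X : Set ℚ, X.Infinite ∧ ∀ A ∈ 𝒜, (A ∩ X).Finite

/-!
Pick an irrational `r₀ ∈ (δ, ε)`, a sequence `b n ↑ r₀` above `δ` and irrationals
`ρ n ∈ (b n, r₀)`. Each member of `𝒜` has at most one accumulation point in `ℚ`, so every interval contains
rationals outside any finitely many members. A sequence of such rationals converging to `ρ n` is
met, by maximality, by a member `A n ∉ {A 0, …, A (n-1)}` in an infinite set `T n`. The union of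
the `T n` accumulates only at the irrationals `ρ n` and `r₀`, so it is closed discrete in `ℚ`, and
it meets each of the distinct `A n` in an infinite set.
-/

open Topology

section Accumulation

variable {X : Type*} [TopologicalSpace X]

lemma disjoint_nhdsNE_principal_of_inter_finite [T1Space X] {S U : Set X} {x : X}
    (hU : U ∈ 𝓝 x) (hSU : (S ∩ U).Finite) : Disjoint (𝓝[≠] x) (𝓟 S) := by
  rw [disjoint_principal_right]
  filter_upwards [nhdsNE_le_cofinite x hSU.compl_mem_cofinite, mem_nhdsWithin_of_mem_nhds hU]
    with y hyS hyU hy using hyS ⟨hy, hyU⟩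

lemma disjoint_nhdsNE_principal_of_forall_nhds_finite_sdiff {Y : Type*} [TopologicalSpace Y]
    [T1Space X] [T2Space Y] {f : X → Y} (hf : Continuous f) {T : Set X} {r : Y}
    (hT : ∀ W ∈ 𝓝 r, (T \ f ⁻¹' W).Finite) {x : X} (hx : f x ≠ r) :
    Disjoint (𝓝[≠] x) (𝓟 T) := by
  obtain ⟨V, W, hV, hW, hVW⟩ := t2_separation_nhds hx
  refine disjoint_nhdsNE_principal_of_inter_finite (hf.continuousAt.preimage_mem_nhds hV)
    ((hT W hW).subset ?_)
  rintro t ⟨htT, htV⟩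
  exact ⟨htT, hVW.notMem_of_mem_left htV⟩

end Accumulation

theorem Function.exists_injective_forall_of_forall_finset_exists {α : Type*} {P : ℕ → α → Prop}
    (h : ∀ (s : Finset α) (n : ℕ), ∃ a ∉ s, P n a) :
    ∃ f : ℕ → α, Injective f ∧ ∀ n, P n (f n) := by
  classical
  choose g hg hP using h
  let s : ℕ → Finset α := fun n => Nat.rec ∅ (fun n s => insert (g s n) s) n
  have hprev : ∀ m n, m < n → g (s m) m ∈ s n := by
    intro m n hmn
    induction n with
    | zero => exact absurd hmn (Nat.not_lt_zero m)
    | succ n ih =>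
      rcases Nat.lt_succ_iff_lt_or_eq.1 hmn with hmn | rfl
      · exact Finset.mem_insert_of_mem (ih hmn)
      · exact Finset.mem_insert_self _ _
  exact ⟨fun n => g (s n) n, .of_lt_imp_ne fun m n hmn he => hg (s n) n (he ▸ hprev m n hmn),
    fun n => hP _ _⟩

lemma closedDiscrete_iff_isClosed_and_isDiscrete {S : Set ℚ} :
    ClosedDiscrete S ↔ IsClosed S ∧ IsDiscrete S := by
  refine and_congr_right fun _ => ⟨fun h => IsDiscrete.of_nhdsWithin fun x hx => ?_,
    fun h x hx => nhds_inter_eq_singleton_of_mem_discrete h hx⟩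
  obtain ⟨U, hU, hUS⟩ := h x hx
  have hSU := inter_mem_nhdsWithin S hU
  rw [inter_comm, hUS] at hSU
  exact le_pure_iff.2 hSU

lemma closedDiscrete_iff_forall_disjoint_nhdsNE {S : Set ℚ} :
    ClosedDiscrete S ↔ ∀ x, Disjoint (𝓝[≠] x) (𝓟 S) :=
  closedDiscrete_iff_isClosed_and_isDiscrete.trans isClosed_and_discrete_iff

lemma exists_forall_ne_disjoint_nhdsNE {B : Set ℚ} (hB : ConvSeq B ∨ ClosedDiscrete B) :
    ∃ q : ℚ, ∀ x ≠ q, Disjoint (𝓝[≠] x) (𝓟 B) := by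
  rcases hB with ⟨-, q, -, hq⟩ | hB
  · exact ⟨q, fun x hx => disjoint_nhdsNE_principal_of_forall_nhds_finite_sdiff continuous_id hq hx⟩
  · exact ⟨0, fun x _ => closedDiscrete_iff_forall_disjoint_nhdsNE.1 hB x⟩

lemma exists_rat_mem_Ioo_notMem_sUnion {ℬ : Set (Set ℚ)} (hℬ : ℬ.Finite)
    (hacc : ∀ B ∈ ℬ, ∃ q : ℚ, ∀ x ≠ q, Disjoint (𝓝[≠] x) (𝓟 B)) {u v : ℝ} (huv : u < v) :
    ∃ x : ℚ, (x : ℝ) ∈ Ioo u v ∧ x ∉ ⋃₀ ℬ := by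
  choose! q hq using hacc
  have hU : IsOpen ((↑) ⁻¹' Ioo u v : Set ℚ) := isOpen_Ioo.preimage Rat.continuous_coe_real
  obtain ⟨y, hy⟩ : ∃ y : ℚ, (y : ℝ) ∈ Ioo u v := exists_rat_btwn huv
  obtain ⟨x₀, hx₀, hx₀q⟩ := ((infinite_of_mem_nhds y (hU.mem_nhds hy)).sdiff (hℬ.image q)).nonempty
  have hfar : (⋃₀ ℬ)ᶜ ∈ 𝓝[≠] x₀ := by
    rw [sUnion_eq_biUnion, compl_iUnion₂]
    exact (biInter_mem hℬ).2 fun B hB => disjoint_principal_right.1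
      (hq B hB x₀ fun h => hx₀q ⟨B, hB, h.symm⟩)
  obtain ⟨x, hx, hxℬ⟩ :=
    Filter.nonempty_of_mem (inter_mem (mem_nhdsWithin_of_mem_nhds (hU.mem_nhds hx₀)) hfar)
  exact ⟨x, hx, hxℬ⟩

lemma exists_injective_tendsto_notMem_sUnion {ℬ : Set (Set ℚ)} (hℬ : ℬ.Finite)
    (hacc : ∀ B ∈ ℬ, ∃ q : ℚ, ∀ x ≠ q, Disjoint (𝓝[≠] x) (𝓟 B)) {c ρ : ℝ} (hcρ : c < ρ) :
    ∃ x : ℕ → ℚ, Function.Injective x ∧ (∀ k, (x k : ℝ) ∈ Ioo c ρ) ∧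
      Tendsto (fun k => (x k : ℝ)) atTop (𝓝 ρ) ∧ ∀ k, x k ∉ ⋃₀ ℬ := by
  obtain ⟨u, hu_mono, hu_mem, hu_lim⟩ := exists_seq_strictMono_tendsto' hcρ
  choose x hx hxℬ using fun k : ℕ =>
    exists_rat_mem_Ioo_notMem_sUnion hℬ hacc (hu_mono k.lt_succ_self)
  have hx_mono : StrictMono fun k => (x k : ℝ) :=
    strictMono_nat_of_lt_succ fun k => (hx k).2.trans (hx (k + 1)).1
  have hxρ : ∀ k, (x k : ℝ) < ρ := fun k => (hx k).2.trans (hu_mem (k + 1)).2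
  refine ⟨x, hx_mono.injective.of_comp, fun k => ⟨(hu_mem k).1.trans (hx k).1, hxρ k⟩,
    tendsto_of_tendsto_of_tendsto_of_le_of_le hu_lim tendsto_const_nhds
      (fun k => (hx k).1.le) (fun k => (hxρ k).le), hxℬ⟩

lemma MaximalAD.exists_notMem_infinite_subset_tendsto {𝒜 : Set (Set ℚ)} (hmax : MaximalAD 𝒜)
    (hkind : ∀ A ∈ 𝒜, ConvSeq A ∨ ClosedDiscrete A) (ℬ : Finset (Set ℚ)) {c ρ : ℝ} (hcρ : c < ρ) :
    ∃ A ∉ ℬ, A ∈ 𝒜 ∧ ∃ T ⊆ A, T.Infinite ∧ (∀ t ∈ T, (t : ℝ) ∈ Ioo c ρ) ∧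
      ∀ W ∈ 𝓝 ρ, (T \ (↑) ⁻¹' W).Finite := by
  obtain ⟨x, hx_inj, hx_mem, hx_lim, hxℬ⟩ := exists_injective_tendsto_notMem_sUnion
    (ℬ.finite_toSet.sep (· ∈ 𝒜)) (fun B hB => exists_forall_ne_disjoint_nhdsNE (hkind B hB.2))
    hcρ
  obtain ⟨A, hA, hAx⟩ : ∃ A ∈ 𝒜, (A ∩ range x).Infinite := by
    by_contra! h
    exact hmax ⟨range x, infinite_range_of_injective hx_inj, h⟩
  obtain ⟨_, hxkA, k, rfl⟩ := hAx.nonempty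
  refine ⟨A, fun hAℬ => hxℬ k ⟨A, ⟨hAℬ, hA⟩, hxkA⟩, hA, A ∩ range x, inter_subset_left, hAx,
    ?_, fun W hW => ?_⟩
  · rintro _ ⟨-, k, rfl⟩
    exact hx_mem k
  · refine ((eventually_cofinite.1 (Nat.cofinite_eq_atTop ▸ hx_lim hW)).image x).subset ?_
    rintro _ ⟨⟨-, k, rfl⟩, hk⟩
    exact mem_image_of_mem x hk

lemma closedDiscrete_iUnion_of_tendsto {b ρ : ℕ → ℝ} {r₀ : ℝ} {T : ℕ → Set ℚ} (hb : Monotone b)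
    (hb_lim : Tendsto b atTop (𝓝 r₀)) (hr₀ : Irrational r₀) (hρ : ∀ n, Irrational (ρ n))
    (hT : ∀ n, ∀ t ∈ T n, b n < t ∧ (t : ℝ) < r₀)
    (hT_lim : ∀ n, ∀ W ∈ 𝓝 (ρ n), (T n \ (↑) ⁻¹' W).Finite) :
    ClosedDiscrete (⋃ n, T n) := by
  refine closedDiscrete_iff_forall_disjoint_nhdsNE.2 fun x => ?_
  have hcast := Rat.continuous_coe_real.continuousAt (x := x)
  rw [disjoint_principal_right, compl_iUnion]
  rcases (hr₀.ne_rat x).symm.lt_or_gt with hx | hx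
  · obtain ⟨N, hN⟩ := (hb_lim.eventually (lt_mem_nhds hx)).exists
    have hpieces : ∀ n ∈ Iio N, (T n)ᶜ ∈ 𝓝[≠] x := fun n _ => disjoint_principal_right.1
      (disjoint_nhdsNE_principal_of_forall_nhds_finite_sdiff Rat.continuous_coe_real (hT_lim n)
        ((hρ n).ne_rat x).symm)
    filter_upwards [mem_nhdsWithin_of_mem_nhds (hcast.preimage_mem_nhds (Iio_mem_nhds hN)),
      (biInter_mem (finite_Iio N)).2 hpieces] with y hyN hyT
    refine mem_iInter.2 fun n hyn => ?_
    rcases lt_or_ge n N with hn | hn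
    · exact mem_iInter₂.1 hyT n hn hyn
    · exact (hyN : (y : ℝ) < b N).not_ge ((hb hn).trans (hT n y hyn).1.le)
  · filter_upwards [mem_nhdsWithin_of_mem_nhds (hcast.preimage_mem_nhds (Ioi_mem_nhds hx))]
      with y hy
    exact mem_iInter.2 fun n hyn => (hy : r₀ < y).not_gt (hT n y hyn).2

theorem exists_closed_discrete_IPlus_general (𝒜 : Set (Set ℚ))
    (hkind : ∀ A ∈ 𝒜, ConvSeq A ∨ ClosedDiscrete A)
    (hmax : MaximalAD 𝒜)
    (δ ε : ℚ) (hδ : 0 < δ) (hδε : δ < ε) :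
    ∃ D : Set ℚ, ClosedDiscrete D ∧ IPlus 𝒜 D ∧ ∀ x ∈ D, δ < |x| ∧ |x| < ε := by
  obtain ⟨r₀, hr₀, hδr₀, hr₀ε⟩ := exists_irrational_btwn (Rat.cast_lt.2 hδε)
  obtain ⟨b, hb_mono, hb_mem, hb_lim⟩ := exists_seq_strictMono_tendsto' hδr₀
  choose ρ hρ hbρ hρr₀ using fun n => exists_irrational_btwn (hb_mem n).2
  obtain ⟨A, hA_inj, hA⟩ := Function.exists_injective_forall_of_forall_finset_exists
    fun ℬ n => hmax.exists_notMem_infinite_subset_tendsto hkind ℬ (hbρ n)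
  choose hA𝒜 T hTA hT_inf hT_mem hT_lim using hA
  have hT_bounds : ∀ n, ∀ t ∈ T n, b n < t ∧ (t : ℝ) < r₀ :=
    fun n t ht => ⟨(hT_mem n t ht).1, (hT_mem n t ht).2.trans (hρr₀ n)⟩
  refine ⟨⋃ n, T n,
    closedDiscrete_iUnion_of_tendsto hb_mono.monotone hb_lim hr₀ hρ hT_bounds hT_lim, ⟨?_, ?_⟩, ?_⟩
  · exact (hT_inf 0).mono (subset_iUnion T 0)
  · exact infinite_of_injective_forall_mem hA_inj fun n =>
      ⟨hA𝒜 n, (hT_inf n).mono (subset_inter (hTA n) (subset_iUnion T n))⟩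
  rintro x ⟨_, ⟨n, rfl⟩, hx⟩
  have hδx : δ < x := Rat.cast_lt.1 ((hb_mem n).1.trans (hT_bounds n x hx).1)
  rw [abs_of_pos (hδ.trans hδx)]
  exact ⟨hδx, Rat.cast_lt.1 ((hT_bounds n x hx).2.trans hr₀ε)⟩

/-- For every `0 < δ < ε` and every mad family of convergent sequences and closed
discrete subsets of ℚ, there is a closed discrete `D ∈ ℐ(𝒜)⁺` with
`δ < |x| < ε` for all `x ∈ D`. -/
theorem exists_closed_discrete_IPlus (𝒜 : Set (Set ℚ))
    (hAD : ADFamily 𝒜)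
    (hkind : ∀ A ∈ 𝒜, ConvSeq A ∨ ClosedDiscrete A)
    (hmax : MaximalAD 𝒜)
    (δ ε : ℚ) (hδ : 0 < δ) (hδε : δ < ε) :
    ∃ D : Set ℚ, ClosedDiscrete D ∧ IPlus 𝒜 D ∧ ∀ x ∈ D, δ < |x| ∧ |x| < ε :=
  exists_closed_discrete_IPlus_general 𝒜 hkind hmax δ ε hδ hδε
end
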